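/- For all natural numbers M ≥ 1 and all j with 0 ≤ j ≤ M, the identity ∑_{k=0}^{j} (-1)^{j-k} 2^{4k} (M/(M+k)) C(2(M−k), j−k) C(M+k, 2k) = C(4M, 2j) holds over the rationals. -/

import Mathlib

/-!
Wilf–Zeilberger method. Let `F(j, k)` be the summand and `S(j) = ∑ₖ F(j, k)`. The binomial
side obeys `(2j+1)(2j+2) C(4M, 2j+2) = (4M-2j)(4M-2j-1) C(4M, 2j)`. For `S` the same recurrence
follows by telescoping over `k` with the certificate
`G(j, k) = -F(j+1, k) · 2k(2k-1)(2M-2k+1) / (2M-k-j)`, which satisfies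
`(2j+1)(2j+2) F(j+1, k) = (4M-2j)(4M-2j-1) F(j, k) + G(j, k+1) - G(j, k)`
(a rational-function identity, given the ratios `F(j+1, k) / F(j, k)` and
`F(j+1, k+1) / F(j+1, k)`),
together with `G(j, 0) = 0` and `G(j, j+1) = -(2j+1)(2j+2) F(j+1, j+1)`.
Both sides equal `1` at `j = 0`.
-/

open Finset

namespace Nat

variable {R : Type*} [CommRing R]

theorem cast_choose_succ_mul (n m : ℕ) :
    (n.choose (m + 1) : R) * (m + 1) = n.choose m * (n - m) := by
  rcases le_or_gt m n with h | h
  · have h' := congrArg (Nat.cast : ℕ → R) (choose_succ_right_eq n m)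
    push_cast [h] at h'
    exact h'
  · simp [choose_eq_zero_of_lt h, choose_eq_zero_of_lt (h.trans (lt_succ_self m))]

theorem cast_succ_choose_mul (n m : ℕ) :
    ((n + 1).choose m : R) * (n + 1 - m) = n.choose m * (n + 1) := by
  have h := congrArg (Nat.cast : ℕ → R) (add_one_mul_choose_eq n m)
  have h' := cast_choose_succ_mul (R := R) (n + 1) m
  push_cast at h h'
  linear_combination -h' - h

theorem cast_choose_add_two_mul (n m : ℕ) :
    (n.choose (m + 2) : R) * ((m + 1) * (m + 2)) = n.choose m * ((n - m) * (n - m - 1)) := by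
  have h₁ := cast_choose_succ_mul (R := R) n m
  have h₂ := cast_choose_succ_mul (R := R) n (m + 1)
  push_cast at h₂
  linear_combination (m + 1 : R) * h₂ + (n - m - 1 : R) * h₁

theorem cast_choose_add_two_succ_mul (n m : ℕ) :
    ((n + 2).choose (m + 1) : R) * ((m + 1) * (n + 1 - m)) = n.choose m * ((n + 2) * (n + 1)) := by
  have h₁ := congrArg (Nat.cast : ℕ → R) (add_one_mul_choose_eq (n + 1) m)
  have h₂ := cast_succ_choose_mul (R := R) n m
  push_cast at h₁
  linear_combination (n + 2 : R) * h₂ - (n + 1 - m : R) * h₁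

theorem cast_succ_choose_add_two_mul (n m : ℕ) :
    ((n + 1).choose (m + 2) : R) * ((m + 1) * (m + 2)) = n.choose m * ((n + 1) * (n - m)) := by
  have h₁ := congrArg (Nat.cast : ℕ → R) (add_one_mul_choose_eq n (m + 1))
  have h₂ := cast_choose_succ_mul (R := R) n m
  push_cast at h₁
  linear_combination -(m + 1 : R) * h₁ + (n + 1 : R) * h₂

end Nat

namespace BinomialWZ

def summand (M j k : ℕ) : ℚ :=
  (-1) ^ (j - k) * 2 ^ (4 * k) * ((M : ℚ) / (M + k)) *
    ((2 * (M - k)).choose (j - k)) * ((M + k).choose (2 * k))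

theorem summand_succ_outer {M j k : ℕ} (hkj : k ≤ j) (hjM : j ≤ M) :
    summand M (j + 1) k * (j + 1 - k) = -(2 * M - k - j) * summand M j k := by
  obtain ⟨e, rfl⟩ := Nat.exists_eq_add_of_le hkj
  obtain ⟨d, rfl⟩ := Nat.exists_eq_add_of_le hjM
  have h := Nat.cast_choose_succ_mul (R := ℚ) (2 * (e + d)) e
  simp only [summand, show k + e + 1 - k = e + 1 by omega, Nat.add_sub_cancel_left,
    show k + e + d - k = e + d by omega, pow_succ]
  push_cast at h ⊢
  linear_combination (-(-1) ^ e * 2 ^ (4 * k) * ((k + e + d : ℚ) / (k + e + d + k)) *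
    ((k + e + d + k).choose (2 * k) : ℚ)) * h

theorem summand_succ_inner {M j k : ℕ} (hkj : k ≤ j) (hjM : j < M) :
    summand M (j + 1) (k + 1) * ((2 * M - 2 * k - 1) * (2 * k + 1) * (2 * k + 2)) =
      -8 * (M + k) * (j + 1 - k) * (2 * M - k - j - 1) * summand M (j + 1) k := by
  obtain ⟨e, rfl⟩ := Nat.exists_eq_add_of_le hkj
  obtain ⟨d, rfl⟩ := Nat.exists_eq_add_of_lt hjM
  have hA := Nat.cast_choose_add_two_succ_mul (R := ℚ) (2 * (e + d)) e
  have hB := Nat.cast_succ_choose_add_two_mul (R := ℚ) (k + e + d + 1 + k) (2 * k)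
  simp only [summand, show k + e + 1 - (k + 1) = e by omega, show k + e + 1 - k = e + 1 by omega,
    show k + e + d + 1 - (k + 1) = e + d by omega, show k + e + d + 1 - k = e + d + 1 by omega,
    show 2 * (e + d + 1) = 2 * (e + d) + 2 by ring,
    show k + e + d + 1 + (k + 1) = k + e + d + 1 + k + 1 by ring,
    show 2 * (k + 1) = 2 * k + 2 by ring, show 4 * (k + 1) = 4 * k + 4 by ring, pow_succ]
  push_cast at hA hB ⊢
  field_simp
  linear_combination 16 * (2 * (e + d) + 1) * ((2 * (e + d)).choose e : ℚ) * hB -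
    8 * (2 * k + e + d + 2) * ((k + e + d + 1 + k).choose (2 * k) : ℚ) * hA

def certificate (M j k : ℕ) : ℚ :=
  -summand M (j + 1) k * (2 * k * (2 * k - 1) * (2 * M - 2 * k + 1)) / (2 * M - k - j)

theorem certificate_zero (M j : ℕ) : certificate M j 0 = 0 := by
  simp [certificate]

theorem summand_succ_mul_eq_add_certificate_sub {M j k : ℕ} (hkj : k ≤ j) (hjM : j < M) :
    summand M (j + 1) k * ((2 * j + 1) * (2 * j + 2)) =
      (4 * M - 2 * j) * (4 * M - 2 * j - 1) * summand M j k +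
        (certificate M j (k + 1) - certificate M j k) := by
  have hkjQ : (k : ℚ) ≤ j := by exact_mod_cast hkj
  have hjMQ : (j : ℚ) + 1 ≤ M := by exact_mod_cast hjM
  have hD : (2 * M - k - j : ℚ) ≠ 0 := by linarith
  have hD' : (2 * M - (k + 1) - j : ℚ) ≠ 0 := by linarith
  have hA := summand_succ_outer hkj hjM.le
  have hB := summand_succ_inner hkj hjM
  have hG₁ : certificate M j (k + 1) = 8 * (M + k) * (j + 1 - k) * summand M (j + 1) k := by
    rw [certificate, Nat.cast_succ, div_eq_iff hD']
    linear_combination -hB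
  have hG₀ : certificate M j k * (2 * M - k - j) =
      -summand M (j + 1) k * (2 * k * (2 * k - 1) * (2 * M - 2 * k + 1)) :=
    div_mul_cancel₀ _ hD
  rw [hG₁]
  refine mul_right_cancel₀ hD ?_
  linear_combination hG₀ - (4 * M - 2 * j) * (4 * M - 2 * j - 1) * hA

theorem certificate_self_succ {M j : ℕ} (hjM : j < M) :
    certificate M j (j + 1) = -summand M (j + 1) (j + 1) * ((2 * j + 1) * (2 * j + 2)) := by
  have hD : (2 * M - (j + 1) - j : ℚ) ≠ 0 := by
    have : (j : ℚ) + 1 ≤ M := by exact_mod_cast hjM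
    linarith
  rw [certificate, Nat.cast_succ, div_eq_iff hD]
  ring

theorem sum_summand_succ_mul {M j : ℕ} (hjM : j < M) :
    (∑ k ∈ range (j + 2), summand M (j + 1) k) * ((2 * j + 1) * (2 * j + 2)) =
      (4 * M - 2 * j) * (4 * M - 2 * j - 1) * ∑ k ∈ range (j + 1), summand M j k := by
  rw [sum_range_succ, add_mul, sum_mul,
    sum_congr rfl fun k hk =>
      summand_succ_mul_eq_add_certificate_sub (mem_range_succ_iff.mp hk) hjM,
    sum_add_distrib, ← mul_sum, sum_range_sub, certificate_zero, certificate_self_succ hjM]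
  ring

theorem sum_summand_eq_choose {M j : ℕ} (hM : 1 ≤ M) (hjM : j ≤ M) :
    ∑ k ∈ range (j + 1), summand M j k = (4 * M).choose (2 * j) := by
  induction j with
  | zero =>
    simp [summand, Nat.cast_ne_zero.mpr (by omega : M ≠ 0)]
  | succ j ih =>
    refine mul_right_cancel₀ (b := ((2 * j + 1) * (2 * j + 2) : ℚ)) (by positivity) ?_
    have h := Nat.cast_choose_add_two_mul (R := ℚ) (4 * M) (2 * j)
    push_cast at h
    rw [sum_summand_succ_mul hjM, ih (by omega), mul_add_one]
    linear_combination -h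

end BinomialWZ

theorem stmt_1 (M j : ℕ) (hM : 1 ≤ M) (hj : j ≤ M) :
    ∑ k ∈ Finset.range (j + 1),
      (-1 : ℚ) ^ (j - k) * 2 ^ (4 * k) * ((M : ℚ) / (M + k)) *
        ((2 * (M - k)).choose (j - k)) * ((M + k).choose (2 * k))
    = ((4 * M).choose (2 * j) : ℚ) :=
  BinomialWZ.sum_summand_eq_choose hM hj
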